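/- arXiv:1709.02594 — 5 statements merged into one kernel-verified Lean document; each statement's English description precedes it below -/
import Mathlib

section
/- Let A0, A1 ∈ ℝ^{n1×n2} and r ≤ min(n1,n2). Suppose A0 = U0 S0 V0ᵀ where U0 ∈ ℝ^{n1×r} and V0 ∈ ℝ^{n2×r} have orthonormal columns (U0ᵀU0 = I_r, V0ᵀV0 = I_r) and S0 ∈ ℝ^{r×r}. Assume rank(A1) = r and rank(A1 V0) = r. Set ΔA = A1 − A0 and define one step of the matrix projector-splitting integrator with increment ΔA: K1 = U0 S0 + ΔA·V0; let K1 = U1 Ŝ1 be a factorization with U1 ∈ ℝ^{n1×r} having orthonormal columns and Ŝ1 ∈ ℝ^{r×r} (QR factorization); S̃ = Ŝ1 − U1ᵀ ΔA V0; L1ᵀ = S̃ V0ᵀ + U1ᵀ ΔA; Y1 = U1 L1ᵀ. Then Y1 = A1, i.e., the integrator reproduces the rank-r matrix A1 exactly. -/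
open Matrix

/-- **Exactness of the matrix projector-splitting integrator** (Theorem 4.1 of
Lubich–Oseledets, restated in discrete form).  If `A1` has rank `r`, `A0 = U0 S0 V0ᵀ`
is a rank-`r` factorization with orthonormal `U0, V0`, and `A1 * V0` has rank `r`
(the discrete form of the invertibility of `V(t1)ᵀ V(t0)`), then one step of the
projector-splitting integrator with increment `ΔA = A1 - A0` reproduces `A1` exactly. -/
theorem matrix_projector_splitting_exactness
    {n1 n2 r : ℕ} (hr : r ≤ min n1 n2)
    (A0 A1 : Matrix (Fin n1) (Fin n2) ℝ)
    (U0 : Matrix (Fin n1) (Fin r) ℝ) (S0 : Matrix (Fin r) (Fin r) ℝ)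
    (V0 : Matrix (Fin n2) (Fin r) ℝ)
    (hU0 : U0ᵀ * U0 = 1) (hV0 : V0ᵀ * V0 = 1)
    (hA0 : A0 = U0 * S0 * V0ᵀ)
    (hrankA1 : A1.rank = r) (hrankA1V0 : (A1 * V0).rank = r)
    -- K-step and its QR factorization:  K1 = U0 S0 + ΔA V0 = U1 Ŝ1
    (U1 : Matrix (Fin n1) (Fin r) ℝ) (Shat1 : Matrix (Fin r) (Fin r) ℝ)
    (hU1 : U1ᵀ * U1 = 1)
    (hK : U0 * S0 + (A1 - A0) * V0 = U1 * Shat1) :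
    -- with the S-step `S̃ = Ŝ1 - U1ᵀ ΔA V0` and the L-step
    -- `L1ᵀ = S̃ V0ᵀ + U1ᵀ ΔA`, the result `Y1 = U1 L1ᵀ` is exactly `A1`:
    U1 * ((Shat1 - U1ᵀ * (A1 - A0) * V0) * V0ᵀ + U1ᵀ * (A1 - A0)) = A1 := by
  -- First, `A1 * V0 = U1 * Shat1`.
  have hA1V0 : A1 * V0 = U1 * Shat1 := by
    rw [← hK, hA0, Matrix.sub_mul, Matrix.mul_assoc (U0 * S0), hV0, Matrix.mul_one]
    abel
  -- Range inclusions and equalities.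
  have h1 : LinearMap.range (A1 * V0).mulVecLin ≤ LinearMap.range A1.mulVecLin := by
    rw [Matrix.mulVecLin_mul]
    exact LinearMap.range_comp_le_range _ _
  have h2 : LinearMap.range (U1 * Shat1).mulVecLin ≤ LinearMap.range U1.mulVecLin := by
    rw [Matrix.mulVecLin_mul]
    exact LinearMap.range_comp_le_range _ _
  have e1 : LinearMap.range (A1 * V0).mulVecLin = LinearMap.range A1.mulVecLin :=
    Submodule.eq_of_le_of_finrank_le h1 (by
      show A1.rank ≤ (A1 * V0).rank
      rw [hrankA1, hrankA1V0])
  have e2 : LinearMap.range (U1 * Shat1).mulVecLin = LinearMap.range U1.mulVecLin :=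
    Submodule.eq_of_le_of_finrank_le h2 (by
      show U1.rank ≤ (U1 * Shat1).rank
      rw [← hA1V0, hrankA1V0]
      exact U1.rank_le_width)
  have hrange : LinearMap.range A1.mulVecLin = LinearMap.range U1.mulVecLin := by
    rw [← e1, hA1V0, e2]
  -- Projection identity: `U1 * (U1ᵀ * A1) = A1`.
  have hPA1 : U1 * (U1ᵀ * A1) = A1 := by
    have key : ∀ v : Fin n2 → ℝ, (U1 * (U1ᵀ * A1)) *ᵥ v = A1 *ᵥ v := by
      intro v
      have hmem : A1 *ᵥ v ∈ LinearMap.range U1.mulVecLin := by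
        rw [← hrange]; exact ⟨v, rfl⟩
      obtain ⟨x, hx⟩ := hmem
      simp only [Matrix.mulVecLin_apply] at hx
      rw [← Matrix.mulVec_mulVec, ← Matrix.mulVec_mulVec, ← hx,
        Matrix.mulVec_mulVec, Matrix.mulVec_mulVec, Matrix.mul_assoc, hU1,
        Matrix.mul_one]
    ext i j
    have := congrFun (key (Pi.single j 1)) i
    simpa [Matrix.mulVec_single_one] using this
  -- Auxiliary identities.
  have hA0V0 : A0 * (V0 * V0ᵀ) = A0 := by
    rw [hA0, Matrix.mul_assoc (U0 * S0), ← Matrix.mul_assoc V0ᵀ, hV0, Matrix.one_mul]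
  have hP0 : U1 * (U1ᵀ * (A0 * (V0 * V0ᵀ))) = U1 * (U1ᵀ * A0) := by rw [hA0V0]
  have hP1 : U1 * (U1ᵀ * (A1 * (V0 * V0ᵀ))) = A1 * (V0 * V0ᵀ) := by
    have h := congrArg (fun M => M * (V0 * V0ᵀ)) hPA1
    simp only [Matrix.mul_assoc] at h ⊢
    exact h
  have hK' : U1 * (Shat1 * V0ᵀ) = A1 * (V0 * V0ᵀ) := by
    have h := congrArg (fun M => M * V0ᵀ) hA1V0
    simp only [Matrix.mul_assoc] at h
    exact h.symm
  -- Now finish by algebra.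
  calc U1 * ((Shat1 - U1ᵀ * (A1 - A0) * V0) * V0ᵀ + U1ᵀ * (A1 - A0))
      = U1 * (Shat1 * V0ᵀ) - U1 * (U1ᵀ * (A1 * (V0 * V0ᵀ)))
        + U1 * (U1ᵀ * (A0 * (V0 * V0ᵀ))) + (U1 * (U1ᵀ * A1) - U1 * (U1ᵀ * A0)) := by
        simp only [Matrix.mul_add, Matrix.mul_sub, Matrix.sub_mul, Matrix.add_mul,
          Matrix.mul_assoc]
        abel
    _ = A1 := by
        rw [hK', hP0, hP1, hPA1]
        abel
end

section
/- Let F : [t0, T] × ℝ^{n1×n2} → ℝ^{n1×n2} be continuous, satisfy ‖F(t,Y) − F(t,Ỹ)‖ ≤ L‖Y − Ỹ‖ and ‖F(t,Y)‖ ≤ B for all Y, Ỹ ∈ ℝ^{n1×n2} and t ∈ [t0,T] (Frobenius norm), and let A(t) solve Ȧ(t) = F(t, A(t)) with A(t0) of rank r. Suppose there is ε ≥ 0 such that for every t ∈ [t0,T] and every rank-r matrix Y = USVᵀ (U ∈ ℝ^{n1×r}, V ∈ ℝ^{n2×r} orthonormal columns, S ∈ ℝ^{r×r} invertible) in a neighborhood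 of A(t), the non-tangential part of F is small: ‖(I − UUᵀ) F(t,Y) (I − VVᵀ)‖ ≤ ε (equivalently, F(t,Y) = M(t,Y) + R(t,Y) with M(t,Y) ∈ T_Y M and ‖R(t,Y)‖ ≤ ε). Let Y_n be the iterates of the matrix projector-splitting integrator with step size h > 0, starting from Y_0 = A(t0), where in each step the three substep differential equations are solved exactly. Then there exist constants c1, c2 depending only on L, B and T − t0 (in particular, independent of n1, n2, r, h, ε, and of all singular values of the exact or approximate solutions) such that ‖Y_n − A(t_n)‖ ≤ c1 h + c2 ε for all n with t_n = t0 + nh ≤ T. -/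
open Matrix Set

namespace MatrixPS

/-- Frobenius norm of a real matrix. -/
noncomputable def mfrob {α β : Type*} [Fintype α] [Fintype β] (A : Matrix α β ℝ) : ℝ :=
  Real.sqrt (∑ a, ∑ b, A a b ^ 2)

/-- One step of the matrix projector-splitting integrator from `t0` to `t1`, from the
factorization `U0 S0 V0ᵀ` to the factorization `U1 S1 V1ᵀ`, with all three substep
differential equations (K-step, S-step, L-step) solved exactly, and with QR
factorizations after the K- and L-steps. -/
def MatStep {n1 n2 r : ℕ}
    (F : ℝ → Matrix (Fin n1) (Fin n2) ℝ → Matrix (Fin n1) (Fin n2) ℝ)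
    (t0 t1 : ℝ)
    (U0 : Matrix (Fin n1) (Fin r) ℝ) (S0 : Matrix (Fin r) (Fin r) ℝ)
    (V0 : Matrix (Fin n2) (Fin r) ℝ)
    (U1 : Matrix (Fin n1) (Fin r) ℝ) (S1 : Matrix (Fin r) (Fin r) ℝ)
    (V1 : Matrix (Fin n2) (Fin r) ℝ) : Prop :=
  ∃ (K : ℝ → Matrix (Fin n1) (Fin r) ℝ) (Shat : Matrix (Fin r) (Fin r) ℝ)
    (S : ℝ → Matrix (Fin r) (Fin r) ℝ) (Lf : ℝ → Matrix (Fin n2) (Fin r) ℝ),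
    -- K-step:  K̇(t) = F(t, K(t) V0ᵀ) V0,  K(t0) = U0 S0,  QR:  K(t1) = U1 Ŝ1
    K t0 = U0 * S0 ∧
    (∀ t ∈ Icc t0 t1, ∀ a b, HasDerivWithinAt (fun s => K s a b)
      ((F t (K t * V0ᵀ) * V0) a b) (Icc t0 t1) t) ∧
    K t1 = U1 * Shat ∧ U1ᵀ * U1 = 1 ∧
    -- S-step:  Ṡ(t) = -U1ᵀ F(t, U1 S(t) V0ᵀ) V0,  S(t0) = Ŝ1
    S t0 = Shat ∧
    (∀ t ∈ Icc t0 t1, ∀ a b, HasDerivWithinAt (fun s => S s a b)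
      ((-(U1ᵀ * F t (U1 * S t * V0ᵀ) * V0)) a b) (Icc t0 t1) t) ∧
    -- L-step:  L̇(t)ᵀ = U1ᵀ F(t, U1 L(t)ᵀ),  L(t0)ᵀ = S(t1) V0ᵀ,  QR:  L(t1) = V1 S1ᵀ
    Lf t0 = V0 * (S t1)ᵀ ∧
    (∀ t ∈ Icc t0 t1, ∀ a b, HasDerivWithinAt (fun s => Lf s a b)
      (((U1ᵀ * F t (U1 * (Lf t)ᵀ))ᵀ) a b) (Icc t0 t1) t) ∧
    Lf t1 = V1 * S1ᵀ ∧ V1ᵀ * V1 = 1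

/-!
Write `X = K V₀ᵀ`, `Z = U₁ S V₀ᵀ` and `W = U₁ Lᵀ` for the curves traced by the three substeps,
`P = U₁ U₁ᵀ`, `Q = V₀ V₀ᵀ`, and `Ŷ = U₁ Ŝ₁ V₀ᵀ`. Each substep is driven by `F` composed with
orthogonal projections, so each curve moves with speed at most `B`, and each starts where the
previous one ended. Hence along a step all of them stay within `‖Y₀ - A(t₀)‖ + O(B h)` of the
exact solution, without any reference to `S⁻¹` or to singular values. The sum `W + Z + X - A`
telescopes over the step to `(Y₁ - A(t₁)) - (Y₀ - A(t₀))`, and its derivative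
`P F(W) - P F(Z) Q + F(X) Q - F(A)` equals `-(1 - P) F(Ŷ) (1 - Q)` up to Lipschitz errors, so it
is `O(ε + L (‖Y₀ - A(t₀)‖ + B h))`. This gives `eₙ₊₁ ≤ (1 + 4 L h) eₙ + h (ε + 15 L B h)`, and the
discrete Grönwall inequality concludes. Since `Ŝ₁` may be singular, the `ε`-bound is first
extended from invertible middle factors to all of them by density.
-/

open scoped Matrix.Norms.Frobenius

section Frobenius

variable {k m n : Type*} [Fintype k] [Fintype m] [Fintype n]

theorem mfrob_eq_norm (A : Matrix m n ℝ) : mfrob A = ‖A‖ := by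
  simp only [mfrob, frobenius_norm_def, Real.norm_eq_abs, Real.rpow_two, sq_abs,
    Real.sqrt_eq_rpow]

theorem frobenius_norm_sq (A : Matrix m n ℝ) : ‖A‖ ^ 2 = trace (A * Aᵀ) := by
  rw [← mfrob_eq_norm, mfrob, Real.sq_sqrt (by positivity)]
  simp [trace, mul_apply, sq]

theorem transpose_eq_of_isStarProjection {P : Matrix n n ℝ} (hP : IsStarProjection P) :
    Pᵀ = P := by
  simpa [star_eq_conjTranspose, conjTranspose_eq_transpose_of_trivial] using
    hP.isSelfAdjoint.star_eq

theorem isStarProjection_mul_transpose [DecidableEq k] {V : Matrix n k ℝ} (hV : Vᵀ * V = 1) :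
    IsStarProjection (V * Vᵀ) where
  isIdempotentElem := by
    rw [IsIdempotentElem, Matrix.mul_assoc, ← Matrix.mul_assoc Vᵀ, hV, Matrix.one_mul]
  isSelfAdjoint := by
    simp [IsSelfAdjoint, star_eq_conjTranspose, conjTranspose_eq_transpose_of_trivial]

theorem frobenius_norm_sq_eq_add_of_isStarProjection [DecidableEq n] {P : Matrix n n ℝ}
    (hP : IsStarProjection P) (X : Matrix m n ℝ) :
    ‖X‖ ^ 2 = ‖X * P‖ ^ 2 + ‖X * (1 - P)‖ ^ 2 := by
  have mul_transpose_self {Q : Matrix n n ℝ} (hQ : IsStarProjection Q) : Q * Qᵀ = Q := by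
    rw [transpose_eq_of_isStarProjection hQ, hQ.isIdempotentElem.eq]
  simp only [frobenius_norm_sq, ← trace_add, transpose_mul, Matrix.mul_assoc]
  rw [← Matrix.mul_assoc P, mul_transpose_self hP, ← Matrix.mul_assoc (1 - P),
    mul_transpose_self hP.one_sub, ← Matrix.mul_add, ← Matrix.add_mul, add_sub_cancel,
    Matrix.one_mul]

theorem frobenius_norm_mul_isStarProjection_le [DecidableEq n] {P : Matrix n n ℝ}
    (hP : IsStarProjection P) (X : Matrix m n ℝ) : ‖X * P‖ ≤ ‖X‖ :=
  (pow_le_pow_iff_left₀ (norm_nonneg _) (norm_nonneg _) two_ne_zero).1 <| by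
    rw [frobenius_norm_sq_eq_add_of_isStarProjection hP X]
    exact le_add_of_nonneg_right (sq_nonneg _)

theorem frobenius_norm_isStarProjection_mul_le [DecidableEq m] {P : Matrix m m ℝ}
    (hP : IsStarProjection P) (X : Matrix m n ℝ) : ‖P * X‖ ≤ ‖X‖ := by
  rw [← frobenius_norm_transpose, transpose_mul, transpose_eq_of_isStarProjection hP,
    ← frobenius_norm_transpose X]
  exact frobenius_norm_mul_isStarProjection_le hP Xᵀ

end Frobenius

section Calculus

variable {m n p : Type*} [Fintype m] [Fintype n] [Fintype p] {f : ℝ → Matrix m n ℝ}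
  {f' : Matrix m n ℝ} {s : Set ℝ} {t : ℝ}

theorem hasDerivWithinAt_matrix_of_entrywise
    (h : ∀ i j, HasDerivWithinAt (fun u => f u i j) (f' i j) s t) :
    HasDerivWithinAt f f' s t :=
  (LinearMap.toContinuousLinearMap (ofLinearEquiv ℝ : (m → n → ℝ) ≃ₗ[ℝ] Matrix m n ℝ).toLinearMap
    ).hasFDerivAt.comp_hasDerivWithinAt t
      (hasDerivWithinAt_pi.2 fun i => hasDerivWithinAt_pi.2 (h i))

theorem _root_.HasDerivWithinAt.matrix_mul_const (hf : HasDerivWithinAt f f' s t)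
    (C : Matrix n p ℝ) : HasDerivWithinAt (fun u => f u * C) (f' * C) s t :=
  (LinearMap.toContinuousLinearMap (mulRightLinearMap m ℝ C)).hasFDerivAt.comp_hasDerivWithinAt
    t hf

theorem _root_.HasDerivWithinAt.const_matrix_mul (hf : HasDerivWithinAt f f' s t)
    (C : Matrix p m ℝ) : HasDerivWithinAt (fun u => C * f u) (C * f') s t :=
  (LinearMap.toContinuousLinearMap (mulLeftLinearMap n ℝ C)).hasFDerivAt.comp_hasDerivWithinAt
    t hf

theorem _root_.HasDerivWithinAt.matrix_transpose (hf : HasDerivWithinAt f f' s t) :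
    HasDerivWithinAt (fun u => (f u)ᵀ) f'ᵀ s t :=
  (LinearMap.toContinuousLinearMap
    (transposeLinearEquiv m n ℝ ℝ).toLinearMap).hasFDerivAt.comp_hasDerivWithinAt t hf

theorem dist_le_of_norm_hasDerivWithinAt_le {E : Type*} [NormedAddCommGroup E]
    [NormedSpace ℝ E] {g g' : ℝ → E} {a b C : ℝ}
    (hg : ∀ t ∈ Icc a b, HasDerivWithinAt g (g' t) (Icc a b) t)
    (hC : ∀ t ∈ Icc a b, ‖g' t‖ ≤ C) {x y : ℝ} (hx : x ∈ Icc a b) (hy : y ∈ Icc a b) :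
    dist (g x) (g y) ≤ C * (b - a) := by
  rw [dist_comm, dist_eq_norm]
  refine (Convex.norm_image_sub_le_of_norm_hasDerivWithin_le hg hC (convex_Icc a b) hx hy).trans
    ?_
  gcongr
  · exact (norm_nonneg _).trans (hC x hx)
  · rw [Real.norm_eq_abs, abs_sub_le_iff]
    constructor <;> linarith [hx.1, hx.2, hy.1, hy.2]

end Calculus

section Density

variable {k m n : Type*} [Fintype k] [Fintype m] [Fintype n] [DecidableEq k]

theorem dense_setOf_isUnit : Dense {S : Matrix k k ℝ | IsUnit S} := by
  intro S
  have hshift : Continuous fun δ : ℝ => S + δ • (1 : Matrix k k ℝ) := by fun_prop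
  have hdense : Dense (spectrum ℝ (-S))ᶜ :=
    (Matrix.finite_spectrum (-S)).countable.dense_compl ℝ
  have := map_mem_closure (t := {S | IsUnit S}) hshift (hdense.closure_eq ▸ mem_univ 0)
    fun δ hδ => by simpa [spectrum.mem_iff, Algebra.algebraMap_eq_smul_one, add_comm] using hδ
  rwa [zero_smul, add_zero] at this

theorem norm_normal_part_le_of_forall_isUnit [DecidableEq m] [DecidableEq n]
    {F : Matrix m n ℝ → Matrix m n ℝ} {L ε : ℝ} (hF : ∀ Y Y', dist (F Y) (F Y') ≤ L * dist Y Y')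
    {U : Matrix m k ℝ} {V : Matrix n k ℝ}
    (hε : ∀ S : Matrix k k ℝ, IsUnit S → ‖(1 - U * Uᵀ) * F (U * S * Vᵀ) * (1 - V * Vᵀ)‖ ≤ ε)
    (S : Matrix k k ℝ) : ‖(1 - U * Uᵀ) * F (U * S * Vᵀ) * (1 - V * Vᵀ)‖ ≤ ε := by
  have hFc := (LipschitzWith.of_dist_le' hF).continuous
  exact le_on_closure hε (by fun_prop) continuousOn_const
    ((dense_setOf_isUnit (k := k)).closure_eq ▸ mem_univ S)

end Density

section Step

variable {m n : Type*} [Fintype m] [Fintype n] [DecidableEq m] [DecidableEq n]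

theorem norm_splitting_defect_le {P : Matrix m m ℝ} {Q : Matrix n n ℝ}
    (hP : IsStarProjection P) (hQ : IsStarProjection Q) (FW FZ FX FA FY : Matrix m n ℝ) :
    ‖P * FW - P * FZ * Q + FX * Q - FA‖ ≤
      ‖FW - FA‖ + ‖FZ - FA‖ + ‖FX - FA‖ + ‖FA - FY‖ + ‖(1 - P) * FY * (1 - Q)‖ := by
  -- the `FA` terms recombine into `-(1 - P) FA (1 - Q)`
  have key : P * FW - P * FZ * Q + FX * Q - FA = P * (FW - FA) - P * (FZ - FA) * Q
      + (FX - FA) * Q - (1 - P) * (FA - FY) * (1 - Q) - (1 - P) * FY * (1 - Q) := by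
    simp only [Matrix.mul_sub, Matrix.sub_mul, Matrix.one_mul, Matrix.mul_one]
    abel
  have sandwich {P' : Matrix m m ℝ} {Q' : Matrix n n ℝ} (hP' : IsStarProjection P')
      (hQ' : IsStarProjection Q') (D : Matrix m n ℝ) : ‖P' * D * Q'‖ ≤ ‖D‖ :=
    (frobenius_norm_mul_isStarProjection_le hQ' _).trans
      (frobenius_norm_isStarProjection_mul_le hP' D)
  rw [key]
  have t1 := norm_sub_le (P * (FW - FA) - P * (FZ - FA) * Q + (FX - FA) * Q
    - (1 - P) * (FA - FY) * (1 - Q)) ((1 - P) * FY * (1 - Q))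
  have t2 := norm_sub_le (P * (FW - FA) - P * (FZ - FA) * Q + (FX - FA) * Q)
    ((1 - P) * (FA - FY) * (1 - Q))
  have t3 := norm_add_le (P * (FW - FA) - P * (FZ - FA) * Q) ((FX - FA) * Q)
  have t4 := norm_sub_le (P * (FW - FA)) (P * (FZ - FA) * Q)
  linarith [frobenius_norm_isStarProjection_mul_le hP (FW - FA), sandwich hP hQ (FZ - FA),
    frobenius_norm_mul_isStarProjection_le hQ (FX - FA),
    sandwich hP.one_sub hQ.one_sub (FA - FY)]

theorem dist_projectorSplitting_step_le {F : ℝ → Matrix m n ℝ → Matrix m n ℝ}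
    {A X Z W : ℝ → Matrix m n ℝ} {P : Matrix m m ℝ} {Q : Matrix n n ℝ} {a b L B ε : ℝ}
    (hab : a ≤ b) (hL : 0 ≤ L) (hP : IsStarProjection P) (hQ : IsStarProjection Q)
    (hLip : ∀ t ∈ Icc a b, ∀ Y Y', dist (F t Y) (F t Y') ≤ L * dist Y Y')
    (hB : ∀ t ∈ Icc a b, ∀ Y, ‖F t Y‖ ≤ B)
    (hε : ∀ t ∈ Icc a b, ‖(1 - P) * F t (X b) * (1 - Q)‖ ≤ ε)
    (hA : ∀ t ∈ Icc a b, HasDerivWithinAt A (F t (A t)) (Icc a b) t)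
    (hX : ∀ t ∈ Icc a b, HasDerivWithinAt X (F t (X t) * Q) (Icc a b) t)
    (hZ : ∀ t ∈ Icc a b, HasDerivWithinAt Z (-(P * F t (Z t) * Q)) (Icc a b) t)
    (hW : ∀ t ∈ Icc a b, HasDerivWithinAt W (P * F t (W t)) (Icc a b) t)
    (hZX : Z a = X b) (hWZ : W a = Z b) :
    dist (W b) (A b) ≤
      (1 + 4 * L * (b - a)) * dist (X a) (A a) + (b - a) * (ε + 15 * L * B * (b - a)) := by
  set h := b - a
  set e := dist (X a) (A a)
  have ha : a ∈ Icc a b := left_mem_Icc.2 hab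
  have hb : b ∈ Icc a b := right_mem_Icc.2 hab
  have drift {g g' : ℝ → Matrix m n ℝ}
      (hg : ∀ t ∈ Icc a b, HasDerivWithinAt g (g' t) (Icc a b) t)
      (hg' : ∀ t ∈ Icc a b, ‖g' t‖ ≤ B) ⦃s t : ℝ⦄ (hs : s ∈ Icc a b) (ht : t ∈ Icc a b) :
      dist (g s) (g t) ≤ B * h :=
    dist_le_of_norm_hasDerivWithinAt_le hg hg' hs ht
  have driftA := drift hA fun t ht => hB t ht _
  have driftX := drift hX fun t ht =>
    (frobenius_norm_mul_isStarProjection_le hQ _).trans (hB t ht _)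
  have driftZ := drift hZ fun t ht => by
    rw [norm_neg]
    exact ((frobenius_norm_mul_isStarProjection_le hQ _).trans
      (frobenius_norm_isStarProjection_mul_le hP _)).trans (hB t ht _)
  have driftW := drift hW fun t ht =>
    (frobenius_norm_isStarProjection_mul_le hP _).trans (hB t ht _)
  have distX {t} (ht : t ∈ Icc a b) : dist (X t) (A t) ≤ e + 2 * B * h := by
    linarith [dist_triangle4 (X t) (X a) (A a) (A t), driftX ht ha, driftA ha ht]
  have distZ {t} (ht : t ∈ Icc a b) : dist (Z t) (A t) ≤ e + 4 * B * h := by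
    have hZa := driftZ ht ha
    rw [hZX] at hZa
    linarith [dist_triangle4 (Z t) (X b) (A b) (A t), distX hb, driftA hb ht]
  have distW {t} (ht : t ∈ Icc a b) : dist (W t) (A t) ≤ e + 6 * B * h := by
    have hWa := driftW ht ha
    rw [hWZ] at hWa
    linarith [dist_triangle4 (W t) (Z b) (A b) (A t), distZ hb, driftA hb ht]
  have distXb {t} (ht : t ∈ Icc a b) : dist (A t) (X b) ≤ e + 3 * B * h := by
    linarith [dist_triangle (A t) (A b) (X b), driftA ht hb, dist_comm (X b) (A b), distX hb]
  have hG : ∀ t ∈ Icc a b, HasDerivWithinAt (fun u => W u + Z u + X u - A u)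
      (P * F t (W t) + -(P * F t (Z t) * Q) + F t (X t) * Q - F t (A t)) (Icc a b) t :=
    fun t ht => (((hW t ht).add (hZ t ht)).add (hX t ht)).sub (hA t ht)
  have hG' : ∀ t ∈ Icc a b,
      ‖P * F t (W t) + -(P * F t (Z t) * Q) + F t (X t) * Q - F t (A t)‖
        ≤ ε + L * (4 * e + 15 * B * h) := by
    intro t ht
    rw [← sub_eq_add_neg]
    refine (norm_splitting_defect_le hP hQ _ _ _ _ (F t (X b))).trans ?_
    simp only [← dist_eq_norm]
    have lip {Y Y' : Matrix m n ℝ} {c : ℝ} (hc : dist Y Y' ≤ c) : dist (F t Y) (F t Y') ≤ L * c :=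
      (hLip t ht Y Y').trans (mul_le_mul_of_nonneg_left hc hL)
    linarith [lip (distW ht), lip (distZ ht), lip (distX ht), lip (distXb ht), hε t ht]
  have telescope : W b - A b =
      (X a - A a) + ((W b + Z b + X b - A b) - (W a + Z a + X a - A a)) := by
    rw [hZX, hWZ]; abel
  calc dist (W b) (A b) ≤ e + (ε + L * (4 * e + 15 * B * h)) * h := by
        rw [dist_eq_norm, telescope]
        refine (norm_add_le _ _).trans ?_
        rw [← dist_eq_norm, ← dist_eq_norm]
        exact add_le_add_right (dist_le_of_norm_hasDerivWithinAt_le hG hG' hb ha) e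
    _ = _ := by ring

end Step

section Integrator

variable {n1 n2 r : ℕ} {F : ℝ → Matrix (Fin n1) (Fin n2) ℝ → Matrix (Fin n1) (Fin n2) ℝ}
  {a b : ℝ} {U0 U1 : Matrix (Fin n1) (Fin r) ℝ} {S0 S1 : Matrix (Fin r) (Fin r) ℝ}
  {V0 V1 : Matrix (Fin n2) (Fin r) ℝ}

theorem MatStep.transpose_mul_self_eq_one (hstep : MatStep F a b U0 S0 V0 U1 S1 V1) :
    V1ᵀ * V1 = 1 := by
  obtain ⟨-, -, -, -, -, -, -, -, -, -, -, -, -, hV1⟩ := hstep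
  exact hV1

theorem MatStep.dist_le {A : ℝ → Matrix (Fin n1) (Fin n2) ℝ} {t0 T L B ε : ℝ} (hab : a ≤ b)
    (ha : t0 ≤ a) (hb : b ≤ T) (hL : 0 ≤ L)
    (hLip : ∀ t ∈ Icc t0 T, ∀ Y Y', dist (F t Y) (F t Y') ≤ L * dist Y Y')
    (hB : ∀ t ∈ Icc t0 T, ∀ Y, ‖F t Y‖ ≤ B)
    (hε : ∀ t ∈ Icc t0 T, ∀ (U : Matrix (Fin n1) (Fin r) ℝ) (S : Matrix (Fin r) (Fin r) ℝ)
      (V : Matrix (Fin n2) (Fin r) ℝ), Uᵀ * U = 1 → Vᵀ * V = 1 →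
      ‖(1 - U * Uᵀ) * F t (U * S * Vᵀ) * (1 - V * Vᵀ)‖ ≤ ε)
    (hA : ∀ t ∈ Icc t0 T, ∀ i j,
      HasDerivWithinAt (fun s => A s i j) (F t (A t) i j) (Icc t0 T) t)
    (hV0 : V0ᵀ * V0 = 1) (hstep : MatStep F a b U0 S0 V0 U1 S1 V1) :
    dist (U1 * S1 * V1ᵀ) (A b) ≤ (1 + 4 * L * (b - a)) * dist (U0 * S0 * V0ᵀ) (A a)
      + (b - a) * (ε + 15 * L * B * (b - a)) := by
  obtain ⟨K, Shat, S, Lf, hK0, hK, hK1, hU1, hS0, hS, hL0, hL', hL1, -⟩ := hstep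
  have hsub : Icc a b ⊆ Icc t0 T := Icc_subset_Icc ha hb
  have hX0 : K a * V0ᵀ = U0 * S0 * V0ᵀ := by rw [hK0]
  have hW1 : U1 * (Lf b)ᵀ = U1 * S1 * V1ᵀ := by
    rw [hL1, transpose_mul, transpose_transpose, Matrix.mul_assoc]
  rw [← hX0, ← hW1]
  refine dist_projectorSplitting_step_le (X := fun t => K t * V0ᵀ)
    (Z := fun t => U1 * S t * V0ᵀ) (W := fun t => U1 * (Lf t)ᵀ) hab hL
    (isStarProjection_mul_transpose hU1) (isStarProjection_mul_transpose hV0)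
    (fun t ht => hLip t (hsub ht)) (fun t ht => hB t (hsub ht)) (fun t ht => ?_)
    (fun t ht => (hasDerivWithinAt_matrix_of_entrywise (hA t (hsub ht))).mono hsub)
    (fun t ht => ?_) (fun t ht => ?_) (fun t ht => ?_) (by simp only [hS0, hK1]) ?_
  · simpa only [hK1] using hε t (hsub ht) U1 Shat V0 hU1 hV0
  · simpa only [Matrix.mul_assoc] using
      (hasDerivWithinAt_matrix_of_entrywise (hK t ht)).matrix_mul_const V0ᵀ
  · simpa only [Matrix.mul_assoc, Matrix.mul_neg, Matrix.neg_mul] using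
      ((hasDerivWithinAt_matrix_of_entrywise (hS t ht)).const_matrix_mul U1).matrix_mul_const V0ᵀ
  · simpa only [transpose_transpose, Matrix.mul_assoc] using
      (hasDerivWithinAt_matrix_of_entrywise (hL' t ht)).matrix_transpose.const_matrix_mul U1
  · simp only [hL0, transpose_mul, transpose_transpose, Matrix.mul_assoc]

end Integrator

theorem le_mul_exp_of_forall_lt_le {e : ℕ → ℝ} {N : ℕ} {γ h δ D : ℝ} (hγ : 0 ≤ γ)
    (hh : 0 ≤ h) (hδ : 0 ≤ δ) (he : ∀ k, 0 ≤ e k) (he0 : e 0 = 0)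
    (hstep : ∀ k < N, e (k + 1) ≤ (1 + γ * h) * e k + h * δ) (hND : N * h ≤ D) :
    e N ≤ D * Real.exp (γ * D) * δ := by
  -- freezing `e` after step `N` makes the recursion hold for all steps
  have hgron := discrete_gronwall (u := fun k => e (min k N)) (c := fun _ => γ * h)
    (b := fun _ => h * δ) (n₀ := 0) (by simp [he0]) (fun k _ => ?_)
    (fun _ _ => mul_nonneg hγ hh) (fun _ _ => mul_nonneg hh hδ) (Nat.zero_le N)
  · simp only [min_self, Nat.zero_min, he0, Finset.sum_const, Nat.card_Ico,
      nsmul_eq_mul, zero_add] at hgron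
    refine hgron.trans ?_
    have hD : 0 ≤ D := (by positivity : (0 : ℝ) ≤ N * h).trans hND
    calc N * (h * δ) * Real.exp (N * (γ * h)) = (N * h) * δ * Real.exp (γ * (N * h)) := by
          rw [mul_left_comm (N : ℝ) γ h]; ring
      _ ≤ D * δ * Real.exp (γ * D) := by gcongr
      _ = D * Real.exp (γ * D) * δ := by ring
  · rcases lt_or_ge k N with hk | hk
    · simpa [min_eq_left hk.le, min_eq_left (Nat.succ_le_of_lt hk)] using hstep k hk
    · simp only [min_eq_right hk, min_eq_right (hk.trans k.le_succ)]
      nlinarith [he N, mul_nonneg hγ hh, mul_nonneg hh hδ, mul_nonneg (mul_nonneg hγ hh) (he N)]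

/-- **Robustness of the matrix projector-splitting integrator to small singular values**
(Kieri–Lubich–Walach, Theorem 2.1).  If `F` is `L`-Lipschitz and bounded by `B` in the
Frobenius norm, the non-tangential part of `F` at every rank-`r` matrix `Y = U S Vᵀ` is
bounded by `ε`, and the initial value `A(t0)` has rank `r`, then the iterates `Yₙ` of the
projector-splitting integrator with step size `h` (all substeps solved exactly) satisfy
`‖Yₙ - A(tₙ)‖ ≤ c₁ h + c₂ ε` with constants depending only on `L`, `B` and `T - t0`. -/
theorem matrix_projector_splitting_robustness
    (L B Δ : ℝ) :
    ∃ c1 c2 : ℝ, ∀ (t0 T : ℝ), T - t0 = Δ →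
    ∀ (n1 n2 r : ℕ)
      (F : ℝ → Matrix (Fin n1) (Fin n2) ℝ → Matrix (Fin n1) (Fin n2) ℝ)
      (A : ℝ → Matrix (Fin n1) (Fin n2) ℝ),
    -- (joint) continuity of `F` in time and Lipschitz continuity and boundedness in `Y`
    (∀ (Y : Matrix (Fin n1) (Fin n2) ℝ) a b, ContinuousOn (fun t => F t Y a b) (Icc t0 T)) →
    (∀ t ∈ Icc t0 T, ∀ Y Y', mfrob (F t Y - F t Y') ≤ L * mfrob (Y - Y')) →
    (∀ t ∈ Icc t0 T, ∀ Y, mfrob (F t Y) ≤ B) →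
    -- `A` solves `Ȧ(t) = F(t, A(t))` on `[t0, T]`
    (∀ t ∈ Icc t0 T, ∀ a b, HasDerivWithinAt (fun s => A s a b) (F t (A t) a b) (Icc t0 T) t) →
    -- the initial value has rank `r`
    (A t0).rank = r →
    ∀ ε : ℝ, 0 ≤ ε →
    -- the non-tangential part of `F` at rank-`r` matrices is bounded by `ε`
    (∀ t ∈ Icc t0 T, ∀ (U : Matrix (Fin n1) (Fin r) ℝ) (S : Matrix (Fin r) (Fin r) ℝ)
       (V : Matrix (Fin n2) (Fin r) ℝ), Uᵀ * U = 1 → Vᵀ * V = 1 → IsUnit S →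
       mfrob ((1 - U * Uᵀ) * F t (U * S * Vᵀ) * (1 - V * Vᵀ)) ≤ ε) →
    ∀ h : ℝ, 0 < h →
    ∀ (Us : ℕ → Matrix (Fin n1) (Fin r) ℝ) (Ss : ℕ → Matrix (Fin r) (Fin r) ℝ)
      (Vs : ℕ → Matrix (Fin n2) (Fin r) ℝ),
    -- start from `Y₀ = A(t0)` given in factored form
    A t0 = Us 0 * Ss 0 * (Vs 0)ᵀ → (Us 0)ᵀ * Us 0 = 1 → (Vs 0)ᵀ * Vs 0 = 1 →
    -- the iterates are produced by the projector-splitting integrator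
    (∀ k : ℕ, t0 + (k + 1 : ℕ) * h ≤ T →
      MatStep F (t0 + k * h) (t0 + (k + 1 : ℕ) * h)
        (Us k) (Ss k) (Vs k) (Us (k + 1)) (Ss (k + 1)) (Vs (k + 1))) →
    ∀ N : ℕ, t0 + N * h ≤ T →
      mfrob (Us N * Ss N * (Vs N)ᵀ - A (t0 + N * h)) ≤ c1 * h + c2 * ε := by
  set L' := max L 0
  set B' := max B 0
  set D := max Δ 0
  refine ⟨15 * L' * B' * (D * Real.exp (4 * L' * D)), D * Real.exp (4 * L' * D), ?_⟩
  intro t0 T hΔ n1 n2 r F A _ hLip hB hA _ ε _ hε h hh Us Ss Vs hinit _ hV0 hsteps N hN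
  simp only [mfrob_eq_norm, ← dist_eq_norm] at hLip hB hε ⊢
  have hLip' (t) (ht : t ∈ Icc t0 T) (Y Y') : dist (F t Y) (F t Y') ≤ L' * dist Y Y' :=
    (hLip t ht Y Y').trans (mul_le_mul_of_nonneg_right (le_max_left L 0) dist_nonneg)
  have hB' (t) (ht : t ∈ Icc t0 T) (Y) : ‖F t Y‖ ≤ B' := (hB t ht Y).trans (le_max_left B 0)
  have hε' (t) (ht : t ∈ Icc t0 T) (U) (S) (V) (hU : Uᵀ * U = 1) (hV : Vᵀ * V = 1) :=
    norm_normal_part_le_of_forall_isUnit (hLip t ht) (hε t ht U · V hU hV) S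
  have htime {k : ℕ} (hk : k ≤ N) : t0 + k * h ≤ T := hN.trans' (by gcongr)
  have hVs (k) (hk : k ≤ N) : (Vs k)ᵀ * Vs k = 1 := by
    rcases k with _ | k
    · exact hV0
    · exact (hsteps k (htime hk)).transpose_mul_self_eq_one
  have hstep (k) (hk : k < N) := (hsteps k (htime hk)).dist_le (by gcongr; simp)
    (le_add_of_nonneg_right (by positivity)) (htime hk) (le_max_right L 0) hLip' hB' hε' hA
    (hVs k hk.le)
  simp only [show ∀ k : ℕ, t0 + (k + 1 : ℕ) * h - (t0 + k * h) = h by intro; push_cast; ring]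
    at hstep
  calc _ ≤ D * Real.exp (4 * L' * D) * (ε + 15 * L' * B' * h) :=
        le_mul_exp_of_forall_lt_le (e := fun k => dist (Us k * Ss k * (Vs k)ᵀ) (A (t0 + k * h)))
          (by positivity) hh.le (by positivity) (fun _ => dist_nonneg) (by simp [hinit]) hstep
          (le_max_of_le_left (by linarith))
    _ = _ := by ring

end MatrixPS
end

section
/- Let Y = C ×_{k=1}^d U_k ∈ ℝ^{n1×⋯×nd} be a tensor of multilinear rank (r1,…,rd), with U_k ∈ ℝ^{n_k×r_k} having orthonormal columns and the core C ∈ ℝ^{r1×⋯×rd} of full multilinear rank (r1,…,rd). Let Z = δC ×_{k=1}^d U_k + Σ_{i=1}^d C ×_i δU_i ×_{k≠i} U_k be an arbitrary element of the tangent space T_Y M of the manifold M of multilinear rank-(r1,…,rd) tensors, where δC ∈ ℝ^{r1×⋯×rd} and δU_i ∈ ℝ^{n_i×r_i} are arbitrary. Then for every i = 1,…,d, the matricization mat_i(Z) lies in the tangent space at mat_i(Y) of the manifold of rank-r_i matrices; explicitly, (I − P_i)·mat_i(Z)·(I − Q_i) = 0, where P_i and Q_i are the orthogonal projections onto the column space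 and the row space of mat_i(Y), respectively. Consequently, T_Y M ⊆ T_Y M_1 ∩ ⋯ ∩ T_Y M_d, where M_i = {X : rank(mat_i(X)) = r_i}, and the condition ‖F(t,Y) − P(Y)F(t,Y)‖ ≤ ε (with P(Y) the orthogonal projection onto T_Y M) implies the mode-wise decompositions F(t,Y) = M_i(t,Y) + R_i(t,Y) with M_i(t,Y) ∈ T_Y M_i and ‖R_i(t,Y)‖ ≤ ε for all i. -/
open Matrix Set

namespace TuckerPaper

/-! ### Basic tensor formalism

A tensor of order `D` with dimensions `n : Fin D → ℕ` is a real-valued function on the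
product index set `Idx n`.  `matr n i` is the `i`-mode matricization, `tenr n i` its
inverse (tensorization), `mlprod B` the multilinear (Tucker) product with the family of
matrices `B`, and `kronFam i B` the Kronecker product of the matrices `B j` over all
modes `j ≠ i`, indexed compatibly with the `i`-mode matricization. -/

variable {D : ℕ}

/-- Index set of a tensor with dimensions `n`. -/
abbrev Idx (n : Fin D → ℕ) : Type := (j : Fin D) → Fin (n j)

/-- Real tensors with dimensions `n`. -/
abbrev Tensor (n : Fin D → ℕ) : Type := Idx n → ℝ

/-- Column index set of the `i`-mode matricization (all modes except `i`). -/
abbrev CIdx (n : Fin D → ℕ) (i : Fin D) : Type := (j : {j : Fin D // j ≠ i}) → Fin (n j.1)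

/-- `i`-mode matricization of a tensor. -/
def matr (n : Fin D → ℕ) (i : Fin D) (X : Tensor n) : Matrix (Fin (n i)) (CIdx n i) ℝ :=
  fun k m => X (fun j => if h : j = i then Fin.cast (congrArg n h).symm k else m ⟨j, h⟩)

/-- Inverse of the `i`-mode matricization (tensorization). -/
def tenr (n : Fin D → ℕ) (i : Fin D) (M : Matrix (Fin (n i)) (CIdx n i) ℝ) : Tensor n :=
  fun idx => M (idx i) (fun j => idx j.1)

/-- Multilinear (Tucker) product `X ×₁ B 1 ×₂ B 2 ⋯ ×_D B D`. -/
noncomputable def mlprod {n m : Fin D → ℕ} (B : ∀ j, Matrix (Fin (m j)) (Fin (n j)) ℝ)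
    (X : Tensor n) : Tensor m :=
  fun idx => ∑ kk : Idx n, (∏ j, B j (idx j) (kk j)) * X kk

/-- Kronecker product of the family `B j` over all modes `j ≠ i`, with indices
ordered compatibly with the `i`-mode matricization. -/
noncomputable def kronFam {p q : Fin D → ℕ} (i : Fin D)
    (B : ∀ j, Matrix (Fin (p j)) (Fin (q j)) ℝ) : Matrix (CIdx p i) (CIdx q i) ℝ :=
  fun a b => ∏ j, B j.1 (a j) (b j)

/-- Frobenius norm of a tensor. -/
noncomputable def tfrob {n : Fin D → ℕ} (X : Tensor n) : ℝ := Real.sqrt (∑ idx, X idx ^ 2)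

/-- Frobenius norm of a matrix. -/
noncomputable def mfrob {α β : Type*} [Fintype α] [Fintype β] (A : Matrix α β ℝ) : ℝ :=
  Real.sqrt (∑ a, ∑ b, A a b ^ 2)

/-- Cast of the row index of a matrix along an equality of dimensions. -/
def rcast {a b : ℕ} (h : a = b) {c : Type*} (M : Matrix (Fin a) c ℝ) : Matrix (Fin b) c ℝ :=
  fun x y => M (Fin.cast h.symm x) y

/-- Cast of the column index of a matrix along an equality of dimensions. -/
def ccast {a b : ℕ} (h : a = b) {c : Type*} (M : Matrix c (Fin a) ℝ) : Matrix c (Fin b) ℝ :=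
  fun x y => M x (Fin.cast h.symm y)

/-- Cast of a `CIdx` column index of a matrix along a family of equalities of dimensions. -/
def cidxcast {p q : Fin D → ℕ} (i : Fin D) (h : ∀ j : Fin D, j ≠ i → p j = q j) {c : Type*}
    (M : Matrix c (CIdx p i) ℝ) : Matrix c (CIdx q i) ℝ :=
  fun x m => M x (fun j => Fin.cast (h j.1 j.2).symm (m j))

/-- `P` is the orthogonal projection onto the column space of `A`. -/
def IsOrthProjOnto {α β : Type*} [Fintype α] [Fintype β] (P : Matrix α α ℝ)
    (A : Matrix α β ℝ) : Prop :=
  Pᵀ = P ∧ P * P = P ∧ (∀ v, P.mulVec v ∈ LinearMap.range A.mulVecLin) ∧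
    ∀ v ∈ LinearMap.range A.mulVecLin, P.mulVec v = v

/-- Mixed dimensions appearing in the mode-`i` subproblem of the nested Tucker
integrator: `r j` for the already processed modes `j < i` and `n j` for the modes
`j ≥ i`. -/
def mdims (n r : Fin D → ℕ) (i : Fin D) : Fin D → ℕ := fun j => if j.1 < i.1 then r j else n j

lemma mdims_self (n r : Fin D → ℕ) (i : Fin D) : mdims n r i i = n i := if_neg (lt_irrefl _)

lemma mdims_lt (n r : Fin D → ℕ) {i j : Fin D} (h : j.1 < i.1) : mdims n r i j = r j := if_pos h

lemma mdims_not_lt (n r : Fin D → ℕ) {i j : Fin D} (h : ¬ j.1 < i.1) : mdims n r i j = n j :=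
  if_neg h

lemma lt_last_of_ne {d : ℕ} {j : Fin (d + 1)} (hj : j ≠ Fin.last d) : j.1 < (Fin.last d).1 :=
  Fin.val_lt_last hj

/-- Family of matrices realizing `X ↦ X ×_{k<i} (U k)ᵀ` as a multilinear product
`Tensor n → Tensor (mdims n r i)`. -/
noncomputable def projFam (n r : Fin D → ℕ) (i : Fin D)
    (U : ∀ j, Matrix (Fin (n j)) (Fin (r j)) ℝ) :
    ∀ j, Matrix (Fin (mdims n r i j)) (Fin (n j)) ℝ :=
  fun j => if h : j.1 < i.1 then rcast (mdims_lt n r h).symm (U j)ᵀ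
    else rcast (mdims_not_lt n r h).symm 1

/-- Family of matrices realizing `X ↦ X ×_{k<i} U k` as a multilinear product
`Tensor (mdims n r i) → Tensor n`. -/
noncomputable def liftFam (n r : Fin D → ℕ) (i : Fin D)
    (U : ∀ j, Matrix (Fin (n j)) (Fin (r j)) ℝ) :
    ∀ j, Matrix (Fin (n j)) (Fin (mdims n r i j)) ℝ :=
  fun j => if h : j.1 < i.1 then ccast (mdims_lt n r h).symm (U j)
    else ccast (mdims_not_lt n r h).symm 1

/-- Family of matrices realizing `X ↦ X ×_{k≥i, k≠i?} ...` namely identity for `k < i`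
and `U k` for `k ≥ i`, as a multilinear product `Tensor r → Tensor (mdims n r i)`. -/
noncomputable def postFam (n r : Fin D → ℕ) (i : Fin D)
    (U : ∀ j, Matrix (Fin (n j)) (Fin (r j)) ℝ) :
    ∀ j, Matrix (Fin (mdims n r i j)) (Fin (r j)) ℝ :=
  fun j => if h : j.1 < i.1 then rcast (mdims_lt n r h).symm 1
    else rcast (mdims_not_lt n r h).symm (U j)

/-- Kronecker factor family `I_{r_k}` for `k < i` and `(U k)ᵀ` for `k > i`, used to
build the corange matrix `V_i^{0,T}` of the nested Tucker integrator. -/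
noncomputable def vFam (n r : Fin D → ℕ) (i : Fin D)
    (U : ∀ j, Matrix (Fin (n j)) (Fin (r j)) ℝ) :
    ∀ j, Matrix (Fin (r j)) (Fin (mdims n r i j)) ℝ :=
  fun j => if h : j.1 < i.1 then ccast (mdims_lt n r h).symm 1
    else ccast (mdims_not_lt n r h).symm (U j)ᵀ

/-- The matrix `V_i^{0,T} = Q_i^{0,T} (⨂_{k<i} I_{r_k} ⊗ ⨂_{k>i} (U_k^0)ᵀ)` of the
nested Tucker integrator (Algorithm 1). -/
noncomputable def VT (n r : Fin D → ℕ) (i : Fin D)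
    (U : ∀ j, Matrix (Fin (n j)) (Fin (r j)) ℝ) (Q : Matrix (CIdx r i) (Fin (r i)) ℝ) :
    Matrix (Fin (r i)) (CIdx (mdims n r i) i) ℝ :=
  Qᵀ * kronFam i (vFam n r i U)

/-- The matrix `V̄_i^{0,T} = Q_i^{0,T} (⨂_{k<i} (U_k^1)ᵀ ⊗ ⨂_{k>i} (U_k^0)ᵀ)` of the
Tucker projector-splitting integrator of Lubich (Algorithm 2). -/
noncomputable def VTbar (n r : Fin D → ℕ) (i : Fin D)
    (U1 U0 : ∀ j, Matrix (Fin (n j)) (Fin (r j)) ℝ) (Q : Matrix (CIdx r i) (Fin (r i)) ℝ) :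
    Matrix (Fin (r i)) (CIdx n i) ℝ :=
  Qᵀ * kronFam i (fun j => if j.1 < i.1 then (U1 j)ᵀ else (U0 j)ᵀ)


/-- `Z` is an element of the tangent space `T_Y M` of the Tucker manifold at
`Y = C ×_k U_k`, i.e. `Z = δC ×_k U_k + ∑ i, C ×_i δU_i ×_{k≠i} U_k` for some core
variation `δC` and basis variations `δU_i`. -/
noncomputable def TuckerTangent {d : ℕ} (n r : Fin d → ℕ)
    (U : ∀ j, Matrix (Fin (n j)) (Fin (r j)) ℝ) (C : Tensor r) (Z : Tensor n) : Prop :=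
  ∃ (δC : Tensor r) (δU : ∀ j, Matrix (Fin (n j)) (Fin (r j)) ℝ),
    Z = mlprod U δC + ∑ i, mlprod (Function.update U i (δU i)) C

/-! ### Auxiliary lemmas for the main theorem -/

lemma fin_cast_self {a : ℕ} (h : a = a) (k : Fin a) : Fin.cast h k = k := rfl

/-- The canonical equivalence between `Idx n` and `Fin (n i) × CIdx n i`. -/
def idxEquiv (n : Fin D → ℕ) (i : Fin D) : Idx n ≃ Fin (n i) × CIdx n i where
  toFun kk := (kk i, fun j => kk j.1)
  invFun p := fun j => if h : j = i then Fin.cast (congrArg n h).symm p.1 else p.2 ⟨j, h⟩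
  left_inv kk := by
    funext j
    by_cases h : j = i
    · subst h; simp
    · simp [h]
  right_inv p := by
    refine Prod.ext ?_ ?_
    · simp
    · funext j
      simp [j.2]

lemma matr_add {n : Fin D → ℕ} (i : Fin D) (X Y : Tensor n) :
    matr n i (X + Y) = matr n i X + matr n i Y := rfl

lemma matr_sum {n : Fin D → ℕ} (i : Fin D) {ι : Type*} (s : Finset ι) (f : ι → Tensor n) :
    matr n i (∑ j ∈ s, f j) = ∑ j ∈ s, matr n i (f j) := by
  ext k c
  simp [matr, Finset.sum_apply, Matrix.sum_apply]

lemma matr_mlprod {n m : Fin D → ℕ} (i : Fin D)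
    (B : ∀ j, Matrix (Fin (m j)) (Fin (n j)) ℝ) (X : Tensor n) :
    matr m i (mlprod B X) = B i * (matr n i X * (kronFam i B)ᵀ) := by
  ext k c
  rw [Matrix.mul_apply]
  show (∑ kk : Idx n, (∏ j, B j _ (kk j)) * X kk) = _
  rw [← Equiv.sum_comp (idxEquiv n i).symm, Fintype.sum_prod_type]
  refine Finset.sum_congr rfl fun a _ => ?_
  rw [Matrix.mul_apply, Finset.mul_sum]
  refine Finset.sum_congr rfl fun b _ => ?_
  have hX : X ((idxEquiv n i).symm (a, b)) = matr n i X a b := rfl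
  rw [hX, Fintype.prod_eq_mul_prod_compl i]
  have h1 : B i (if h : i = i then Fin.cast (congrArg m h).symm k else c ⟨i, h⟩)
      (((idxEquiv n i).symm (a, b)) i) = B i k a := by simp [idxEquiv]
  rw [h1]
  have h2 : ∏ j ∈ ({i}ᶜ : Finset (Fin D)),
      B j (if h : j = i then Fin.cast (congrArg m h).symm k else c ⟨j, h⟩)
        (((idxEquiv n i).symm (a, b)) j) = (kronFam i B)ᵀ b c := by
    have step1 : ∀ j ∈ ({i}ᶜ : Finset (Fin D)),
        B j (if h : j = i then Fin.cast (congrArg m h).symm k else c ⟨j, h⟩)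
          (((idxEquiv n i).symm (a, b)) j)
        = (fun j => if h : j ≠ i then B j (c ⟨j, h⟩) (b ⟨j, h⟩) else 1) j := by
      intro j hj
      have hji : j ≠ i := by simpa using hj
      simp [idxEquiv, hji]
    rw [Finset.prod_congr rfl step1,
      Finset.prod_subtype (p := fun j => j ≠ i) ({i}ᶜ : Finset (Fin D)) (fun j => by simp)
        (fun j => if h : j ≠ i then B j (c ⟨j, h⟩) (b ⟨j, h⟩) else 1)]
    simp only [Matrix.transpose_apply, kronFam]
    refine Fintype.prod_congr _ _ (fun j => ?_)
    rw [dif_pos j.2]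
  rw [h2]
  ring

lemma kronFam_update_self {p q : Fin D → ℕ} (i : Fin D)
    (B : ∀ j, Matrix (Fin (p j)) (Fin (q j)) ℝ) (M : Matrix (Fin (p i)) (Fin (q i)) ℝ) :
    kronFam i (Function.update B i M) = kronFam i B := by
  ext a b
  exact Fintype.prod_congr _ _ fun j => by rw [Function.update_of_ne j.2]

lemma proj_left {α β γ : Type*} [Fintype α] [Fintype β] [Fintype γ] [DecidableEq α] [DecidableEq β]
    (P : Matrix α α ℝ) (Y : Matrix α γ ℝ) (Ui : Matrix α β ℝ) (N : Matrix β γ ℝ)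
    (hP : IsOrthProjOnto P Y) (hYeq : Y = Ui * N)
    (hrank : Y.rank = Fintype.card β) (hUo : Uiᵀ * Ui = 1) :
    (1 - P) * Ui = 0 := by
  have hle : LinearMap.range Y.mulVecLin ≤ LinearMap.range Ui.mulVecLin := by
    rw [hYeq, Matrix.mulVecLin_mul]
    exact LinearMap.range_comp_le_range _ _
  have hUirank : Ui.rank = Fintype.card β := by
    refine le_antisymm (Matrix.rank_le_card_width Ui) ?_
    calc Fintype.card β = (Uiᵀ * Ui).rank := by rw [hUo, Matrix.rank_one]
      _ ≤ Ui.rank := Matrix.rank_mul_le_right _ _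
  have heq : LinearMap.range Y.mulVecLin = LinearMap.range Ui.mulVecLin := by
    refine Submodule.eq_of_le_of_finrank_le hle ?_
    show Ui.rank ≤ Y.rank
    rw [hUirank, hrank]
  have hPU : P * Ui = Ui := by
    ext k l
    have hmem : Ui.mulVec (Pi.single l 1) ∈ LinearMap.range Y.mulVecLin := by
      rw [heq]; exact ⟨Pi.single l 1, rfl⟩
    have h := hP.2.2.2 _ hmem
    rw [Matrix.mulVec_mulVec] at h
    have h2 := congrFun h k
    simpa [Matrix.mulVec_single] using h2
  rw [Matrix.sub_mul, Matrix.one_mul, hPU, sub_self]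

lemma proj_right {α β γ : Type*} [Fintype α] [Fintype β] [Fintype γ] [DecidableEq β] [DecidableEq γ]
    (Q : Matrix γ γ ℝ) (Y : Matrix α γ ℝ) (Ui : Matrix α β ℝ) (N : Matrix β γ ℝ)
    (hQ : IsOrthProjOnto Q Yᵀ) (hYeq : Y = Ui * N) (hUo : Uiᵀ * Ui = 1) :
    N * (1 - Q) = 0 := by
  have hNT : Q * Nᵀ = Nᵀ := by
    ext k l
    have hmem : Nᵀ.mulVec (Pi.single l 1) ∈ LinearMap.range (Yᵀ).mulVecLin := by
      refine ⟨Ui.mulVec (Pi.single l 1), ?_⟩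
      show (Yᵀ).mulVec _ = _
      rw [hYeq, Matrix.transpose_mul, Matrix.mulVec_mulVec, Matrix.mul_assoc, hUo,
        Matrix.mul_one]
    have h := hQ.2.2.2 _ hmem
    rw [Matrix.mulVec_mulVec] at h
    have h2 := congrFun h k
    simpa [Matrix.mulVec_single] using h2
  have hz : (1 - Q) * Nᵀ = 0 := by rw [Matrix.sub_mul, Matrix.one_mul, hNT, sub_self]
  have hQT : (1 - Q)ᵀ = 1 - Q := by rw [Matrix.transpose_sub, Matrix.transpose_one, hQ.1]
  calc N * (1 - Q) = ((1 - Q)ᵀ * Nᵀ)ᵀ := by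
        rw [Matrix.transpose_mul, Matrix.transpose_transpose, Matrix.transpose_transpose]
    _ = 0 := by rw [hQT, hz, Matrix.transpose_zero]

/-- **Tangent vectors of the Tucker manifold are tangent to each fixed-unfolding-rank
matrix manifold.**  Let `Y = C ×_k U_k` have multilinear rank `(r_1, …, r_d)` with
orthonormal `U_k` and core `C` of full multilinear rank.  Then every tangent vector
`Z ∈ T_Y M` satisfies `(I - P_i) mat_i(Z) (I - Q_i) = 0` for every mode `i`, where
`P_i, Q_i` are the orthogonal projections onto the column and row spaces of `mat_i(Y)`;
that is, `T_Y M ⊆ T_Y M_1 ∩ ⋯ ∩ T_Y M_d`.  Consequently, if `F` is within Frobenius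
distance `ε` of some tangent vector (as is the case when `‖F - P(Y)F‖ ≤ ε` with `P(Y)`
the orthogonal projection onto `T_Y M`), then for every mode `i` there is a
decomposition `F = M_i + R_i` with `M_i ∈ T_Y M_i` and `‖R_i‖ ≤ ε`. -/
theorem tucker_tangent_subset_mode_tangents
    {d : ℕ} (n r : Fin d → ℕ)
    (C : Tensor r) (hC : ∀ i, (matr r i C).rank = r i)
    (U : ∀ j, Matrix (Fin (n j)) (Fin (r j)) ℝ)
    (hU : ∀ j, (U j)ᵀ * U j = 1)
    (hY : ∀ i, (matr n i (mlprod U C)).rank = r i) :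
    (∀ Z : Tensor n, TuckerTangent n r U C Z →
      ∀ (i : Fin d) (P : Matrix (Fin (n i)) (Fin (n i)) ℝ)
        (Q : Matrix (CIdx n i) (CIdx n i) ℝ),
        IsOrthProjOnto P (matr n i (mlprod U C)) →
        IsOrthProjOnto Q (matr n i (mlprod U C))ᵀ →
        (1 - P) * matr n i Z * (1 - Q) = 0) ∧
    (∀ (F : Tensor n) (ε : ℝ),
      (∃ G : Tensor n, TuckerTangent n r U C G ∧ tfrob (F - G) ≤ ε) →
      ∀ i : Fin d, ∃ M R : Tensor n, F = M + R ∧ tfrob R ≤ ε ∧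
        ∀ (P : Matrix (Fin (n i)) (Fin (n i)) ℝ) (Q : Matrix (CIdx n i) (CIdx n i) ℝ),
          IsOrthProjOnto P (matr n i (mlprod U C)) →
          IsOrthProjOnto Q (matr n i (mlprod U C))ᵀ →
          (1 - P) * matr n i M * (1 - Q) = 0) := by
  have key : ∀ Z : Tensor n, TuckerTangent n r U C Z →
      ∀ (i : Fin d) (P : Matrix (Fin (n i)) (Fin (n i)) ℝ)
        (Q : Matrix (CIdx n i) (CIdx n i) ℝ),
        IsOrthProjOnto P (matr n i (mlprod U C)) →
        IsOrthProjOnto Q (matr n i (mlprod U C))ᵀ →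
        (1 - P) * matr n i Z * (1 - Q) = 0 := by
    rintro Z ⟨δC, δU, rfl⟩ i P Q hP hQ
    set N : Matrix (Fin (r i)) (CIdx n i) ℝ := matr r i C * (kronFam i U)ᵀ with hN
    have hYeq : matr n i (mlprod U C) = U i * N := matr_mlprod i U C
    set A : Matrix (Fin (r i)) (CIdx n i) ℝ :=
      matr r i δC * (kronFam i U)ᵀ +
        ∑ j ∈ ({i}ᶜ : Finset (Fin d)),
          matr r i C * (kronFam i (Function.update U j (δU j)))ᵀ with hA
    have hmatrZ : matr n i (mlprod U δC + ∑ j, mlprod (Function.update U j (δU j)) C)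
        = U i * A + δU i * N := by
      rw [matr_add, matr_sum, matr_mlprod, Fintype.sum_eq_add_sum_compl i,
        matr_mlprod, Function.update_self, kronFam_update_self]
      have hrest : ∑ j ∈ ({i}ᶜ : Finset (Fin d)),
          matr n i (mlprod (Function.update U j (δU j)) C)
          = ∑ j ∈ ({i}ᶜ : Finset (Fin d)),
              U i * (matr r i C * (kronFam i (Function.update U j (δU j)))ᵀ) := by
        refine Finset.sum_congr rfl fun j hj => ?_
        have hne : i ≠ j := fun h => (Finset.mem_compl.mp hj) (by simp [h])
        rw [matr_mlprod, Function.update_of_ne hne]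
      rw [hrest, ← Matrix.mul_sum, hA, Matrix.mul_add]
      abel
    rw [hmatrZ]
    have z1 : (1 - P) * U i = 0 := by
      refine proj_left P _ (U i) N hP hYeq ?_ (hU i)
      rw [Fintype.card_fin]
      exact hY i
    have z2 : N * (1 - Q) = 0 := proj_right Q _ (U i) N hQ hYeq (hU i)
    have expand : (1 - P) * (U i * A + δU i * N) * (1 - Q)
        = ((1 - P) * U i) * (A * (1 - Q)) + ((1 - P) * δU i) * (N * (1 - Q)) := by
      simp only [Matrix.mul_add, Matrix.add_mul, Matrix.mul_assoc]
    rw [expand, z1, z2, Matrix.zero_mul, Matrix.mul_zero, add_zero]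
  refine ⟨key, ?_⟩
  rintro F ε ⟨G, hG, hfr⟩ i
  exact ⟨G, F - G, by funext idx; simp, hfr, fun P Q hP hQ => key G hG i P Q hP hQ⟩


end TuckerPaper
end

section
/- Let Y ∈ ℝ^{n1×⋯×nd} be a tensor with rank(mat_d(Y)) = r_d, let U_k ∈ ℝ^{n_k×r_k} have orthonormal columns for k = 1,…,d−1, and suppose Y ×_{k=1}^{d−1} (U_k U_kᵀ) = Y. If M ∈ ℝ^{n1×⋯×nd} lies in the tangent space T_Y M_d of the manifold M_d = {X : rank(mat_d(X)) = r_d} at Y — that is, (I − P)·mat_d(M)·(I − Q) = 0 where P and Q are the orthogonal projections onto the column space and row space of mat_d(Y) — then also M ×_{k=1}^{d−1} (U_k U_kᵀ) ∈ T_Y M_d, i.e., (I − P)·mat_d(M ×_{k=1}^{d−1} (U_k U_kᵀ))·(I − Q) = 0. -/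
open Matrix Set

namespace TuckerPaper

/-! ### Basic tensor formalism

A tensor of order `D` with dimensions `n : Fin D → ℕ` is a real-valued function on the
product index set `Idx n`.  `matr n i` is the `i`-mode matricization, `tenr n i` its
inverse (tensorization), `mlprod B` the multilinear (Tucker) product with the family of
matrices `B`, and `kronFam i B` the Kronecker product of the matrices `B j` over all
modes `j ≠ i`, indexed compatibly with the `i`-mode matricization. -/

variable {D : ℕ}

/-- Splitting an index into the `i`-th coordinate and the rest. -/
def splitIdx (n : Fin D → ℕ) (i : Fin D) : Idx n ≃ Fin (n i) × CIdx n i where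
  toFun kk := (kk i, fun j => kk j.1)
  invFun p := fun j => if h : j = i then Fin.cast (congrArg n h).symm p.1 else p.2 ⟨j, h⟩
  left_inv kk := by
    funext j
    by_cases h : j = i
    · subst h; simp
    · simp [h]
  right_inv p := by
    refine Prod.ext (by simp) ?_
    funext j
    simp [j.2]

/-- Matricization of a multilinear product with identity in mode `i` and symmetric
square factors: `mat_i (X ×ⱼ B j) = mat_i X * K` with `K` the Kronecker factor. -/
theorem matr_mlprod_eq (n : Fin D → ℕ) (i : Fin D)
    (B : ∀ j, Matrix (Fin (n j)) (Fin (n j)) ℝ) (hBi : B i = 1)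
    (hsym : ∀ j, (B j)ᵀ = B j) (X : Tensor n) :
    matr n i (mlprod B X) = matr n i X * kronFam i B := by
  classical
  ext k m
  rw [Matrix.mul_apply]
  show (∑ kk : Idx n, (∏ j, B j _ (kk j)) * X kk) = _
  rw [← Equiv.sum_comp (splitIdx n i).symm, Fintype.sum_prod_type]
  have hprod : ∀ (a : Idx n) (kk : Idx n),
      (∏ j, B j (a j) (kk j)) = B i (a i) (kk i) *
        ∏ j : {j : Fin D // j ≠ i}, B j.1 (a j.1) (kk j.1) := by
    intro a kk
    rw [Finset.prod_eq_mul_prod_sdiff_singleton_of_mem (Finset.mem_univ i)]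
    congr 1
    exact (Finset.prod_subtype (p := fun j => j ≠ i) (Finset.univ \ {i}) (fun x => by simp) (fun j => B j (a j) (kk j)))
  have step : ∀ (k' : Fin (n i)) (b : CIdx n i),
      (∏ j, B j ((fun j => if h : j = i then Fin.cast (congrArg n h).symm k else m ⟨j, h⟩) j)
        (((splitIdx n i).symm (k', b)) j)) * X ((splitIdx n i).symm (k', b))
      = (if k = k' then 1 else 0) *
        ((∏ j : {j : Fin D // j ≠ i}, B j.1 (m j) (b j)) * matr n i X k' b) := by
    intro k' b
    rw [hprod]
    have h1 : (if h : i = i then Fin.cast (congrArg n h).symm k else m ⟨i, h⟩) = k := by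
      simp
    have h2 : ((splitIdx n i).symm (k', b)) i = k' := by simp [splitIdx]
    rw [h1, h2, hBi, Matrix.one_apply]
    have h3 : (∏ j : {j : Fin D // j ≠ i},
        B j.1 ((fun j => if h : j = i then Fin.cast (congrArg n h).symm k else m ⟨j, h⟩) j.1)
          (((splitIdx n i).symm (k', b)) j.1))
        = ∏ j : {j : Fin D // j ≠ i}, B j.1 (m j) (b j) := by
      apply Finset.prod_congr rfl
      intro j _
      simp [splitIdx, j.2]
    rw [h3]
    have h4 : X ((splitIdx n i).symm (k', b)) = matr n i X k' b := rfl
    rw [h4, mul_assoc]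
  simp only [step]
  rw [Finset.sum_comm]
  simp only [ite_mul, one_mul, zero_mul, Finset.sum_ite_eq, Finset.mem_univ, if_true]
  refine Finset.sum_congr rfl fun b _ => ?_
  rw [mul_comm]
  congr 1
  refine Finset.prod_congr rfl fun j _ => ?_
  exact congrFun (congrFun (hsym j.1) (b j)) (m j)

/-- **The tangential part of the projected vector field remains tangential** (key lemma
in the robustness proof for the nested Tucker integrator).  Let `Y` be a tensor whose
`d`-mode matricization has rank `r_d`, let `U k` have orthonormal columns for all modes
`k` before the last one, and suppose `Y ×_{k<d} (U_k U_kᵀ) = Y`.  If `M` is tangent to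
the manifold `M_d = {X : rank(mat_d X) = r_d}` at `Y`, i.e. `(I-P) mat_d(M) (I-Q) = 0`
with `P, Q` the orthogonal projections onto the column and row spaces of `mat_d Y`,
then `M ×_{k<d} (U_k U_kᵀ)` is tangent at `Y` as well. -/
theorem projected_tangent_is_tangent
    {d : ℕ} (n : Fin (d + 1) → ℕ) (rd : ℕ) (rk : Fin (d + 1) → ℕ)
    (Y M : Tensor n)
    (hrank : (matr n (Fin.last d) Y).rank = rd)
    (U : ∀ k, Matrix (Fin (n k)) (Fin (rk k)) ℝ)
    (hU : ∀ k, k ≠ Fin.last d → (U k)ᵀ * U k = 1)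
    (hYproj : mlprod (fun j => if j = Fin.last d then 1 else U j * (U j)ᵀ) Y = Y)
    (P : Matrix (Fin (n (Fin.last d))) (Fin (n (Fin.last d))) ℝ)
    (Q : Matrix (CIdx n (Fin.last d)) (CIdx n (Fin.last d)) ℝ)
    (hP : IsOrthProjOnto P (matr n (Fin.last d) Y))
    (hQ : IsOrthProjOnto Q (matr n (Fin.last d) Y)ᵀ)
    (hM : (1 - P) * matr n (Fin.last d) M * (1 - Q) = 0) :
    (1 - P) * matr n (Fin.last d)
        (mlprod (fun j => if j = Fin.last d then 1 else U j * (U j)ᵀ) M) * (1 - Q) = 0 := by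
  classical
  set B : ∀ j : Fin (d + 1), Matrix (Fin (n j)) (Fin (n j)) ℝ :=
    fun j => if j = Fin.last d then 1 else U j * (U j)ᵀ with hBdef
  have hBi : B (Fin.last d) = 1 := if_pos rfl
  have hsym : ∀ j, (B j)ᵀ = B j := by
    intro j
    by_cases h : j = Fin.last d
    · simp [hBdef, h]
    · simp [hBdef, h, Matrix.transpose_mul, Matrix.transpose_transpose]
  set K := kronFam (Fin.last d) B with hKdef
  have hKsym : Kᵀ = K := by
    ext a b
    show K b a = K a b
    refine Finset.prod_congr rfl fun j _ => ?_
    exact congrFun (congrFun (hsym j.1) (a j)) (b j)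
  have hmm : matr n (Fin.last d) (mlprod B M) = matr n (Fin.last d) M * K :=
    matr_mlprod_eq n _ B hBi hsym M
  have hyy : matr n (Fin.last d) Y * K = matr n (Fin.last d) Y := by
    conv_rhs => rw [← hYproj]
    exact (matr_mlprod_eq n _ B hBi hsym Y).symm
  have hKY : K * (matr n (Fin.last d) Y)ᵀ = (matr n (Fin.last d) Y)ᵀ := by
    calc K * (matr n (Fin.last d) Y)ᵀ = (matr n (Fin.last d) Y * Kᵀ)ᵀ := by
          rw [Matrix.transpose_mul, Matrix.transpose_transpose]
      _ = (matr n (Fin.last d) Y)ᵀ := by rw [hKsym, hyy]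
  have hfix : ∀ v ∈ LinearMap.range (matr n (Fin.last d) Y)ᵀ.mulVecLin,
      K.mulVec v = v := by
    rintro v ⟨w, rfl⟩
    simp only [Matrix.mulVecLin_apply]
    rw [Matrix.mulVec_mulVec, hKY]
  have hKQ : K * Q = Q := by
    have hv : ∀ v, (K * Q).mulVec v = Q.mulVec v := fun v => by
      rw [← Matrix.mulVec_mulVec]
      exact hfix _ (hQ.2.2.1 v)
    apply Matrix.toLin'.injective
    refine LinearMap.ext fun v => ?_
    simp only [Matrix.toLin'_apply, hv v]
  have hQK : Q * K = Q := by
    have h := congrArg Matrix.transpose hKQ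
    rwa [Matrix.transpose_mul, hKsym, hQ.1] at h
  have hcomm : K * (1 - Q) = (1 - Q) * K := by
    rw [Matrix.mul_sub, Matrix.sub_mul, Matrix.mul_one, Matrix.one_mul, hKQ, hQK]
  rw [hmm]
  calc (1 - P) * (matr n (Fin.last d) M * K) * (1 - Q)
      = (1 - P) * matr n (Fin.last d) M * (K * (1 - Q)) := by
        rw [← Matrix.mul_assoc, Matrix.mul_assoc ((1 - P) * matr n (Fin.last d) M)]
    _ = (1 - P) * matr n (Fin.last d) M * ((1 - Q) * K) := by rw [hcomm]
    _ = (1 - P) * matr n (Fin.last d) M * (1 - Q) * K := by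
        rw [Matrix.mul_assoc ((1 - P) * matr n (Fin.last d) M)]
    _ = 0 := by rw [hM, Matrix.zero_mul]


end TuckerPaper
end

section
/- Let A0 ∈ ℝ^{n1×n2} with A0 = U0 S0 V0ᵀ, where V0 ∈ ℝ^{n2×r} has orthonormal columns (V0ᵀV0 = I_r), U0 ∈ ℝ^{n1×r}, S0 ∈ ℝ^{r×r}. Let ΔA ∈ ℝ^{n1×n2} be arbitrary, and let U1 ∈ ℝ^{n1×r} with orthonormal columns (U1ᵀU1 = I_r) and Ŝ1 ∈ ℝ^{r×r} satisfy (A0 + ΔA)·V0 = U1·Ŝ1 (the K-step followed by QR factorization). Define S̃ = Ŝ1 − U1ᵀ·ΔA·V0 (the S-step). Then: (a) U1·S̃·V0ᵀ = A0 + (I − U1U1ᵀ)·ΔA·V0V0ᵀ; and (b) S̃·V0ᵀ = U1ᵀ·A0. -/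
open Matrix

/-- **Closed-form identities for the K- and S-steps of the matrix projector-splitting
integrator with explicit increment `ΔA`.**  Given `A0 = U0 S0 V0ᵀ` with `V0ᵀ V0 = 1`,
and the K-step followed by a QR factorization `(A0 + ΔA) V0 = U1 Ŝ1` with `U1ᵀ U1 = 1`,
the S-step result `S̃ = Ŝ1 - U1ᵀ ΔA V0` satisfies
(a) `U1 S̃ V0ᵀ = A0 + (I - U1 U1ᵀ) ΔA V0 V0ᵀ` and (b) `S̃ V0ᵀ = U1ᵀ A0`. -/
theorem KS_step_closed_form
    {n1 n2 r : ℕ}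
    (A0 ΔA : Matrix (Fin n1) (Fin n2) ℝ)
    (U0 : Matrix (Fin n1) (Fin r) ℝ) (S0 : Matrix (Fin r) (Fin r) ℝ)
    (V0 : Matrix (Fin n2) (Fin r) ℝ)
    (hV0 : V0ᵀ * V0 = 1)
    (hA0 : A0 = U0 * S0 * V0ᵀ)
    (U1 : Matrix (Fin n1) (Fin r) ℝ) (Shat1 : Matrix (Fin r) (Fin r) ℝ)
    (hU1 : U1ᵀ * U1 = 1)
    (hK : (A0 + ΔA) * V0 = U1 * Shat1) :
    U1 * (Shat1 - U1ᵀ * ΔA * V0) * V0ᵀ = A0 + (1 - U1 * U1ᵀ) * (ΔA * (V0 * V0ᵀ)) ∧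
    (Shat1 - U1ᵀ * ΔA * V0) * V0ᵀ = U1ᵀ * A0 := by
  have hAVV : A0 * (V0 * V0ᵀ) = A0 := by
    rw [hA0]
    calc U0 * S0 * V0ᵀ * (V0 * V0ᵀ) = U0 * S0 * ((V0ᵀ * V0) * V0ᵀ) := by
          simp only [Matrix.mul_assoc]
      _ = U0 * S0 * V0ᵀ := by rw [hV0, Matrix.one_mul]
  have hS : Shat1 = U1ᵀ * (A0 + ΔA) * V0 := by
    calc Shat1 = (U1ᵀ * U1) * Shat1 := by rw [hU1, one_mul]
      _ = U1ᵀ * ((A0 + ΔA) * V0) := by rw [Matrix.mul_assoc, ← hK]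
      _ = U1ᵀ * (A0 + ΔA) * V0 := by rw [Matrix.mul_assoc]
  have hSt : Shat1 - U1ᵀ * ΔA * V0 = U1ᵀ * A0 * V0 := by
    rw [hS, Matrix.mul_add, Matrix.add_mul]; abel
  constructor
  · have hUS : U1 * Shat1 * V0ᵀ = (A0 + ΔA) * (V0 * V0ᵀ) := by
      rw [← hK]; simp only [Matrix.mul_assoc]
    calc U1 * (Shat1 - U1ᵀ * ΔA * V0) * V0ᵀ
        = U1 * Shat1 * V0ᵀ - U1 * (U1ᵀ * ΔA * V0) * V0ᵀ := by
          rw [Matrix.mul_sub, Matrix.sub_mul]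
      _ = (A0 + ΔA) * (V0 * V0ᵀ) - U1 * U1ᵀ * (ΔA * (V0 * V0ᵀ)) := by
          rw [hUS]; simp only [Matrix.mul_assoc]
      _ = A0 + (1 - U1 * U1ᵀ) * (ΔA * (V0 * V0ᵀ)) := by
          rw [Matrix.add_mul, hAVV, Matrix.sub_mul, Matrix.one_mul]; abel
  · calc (Shat1 - U1ᵀ * ΔA * V0) * V0ᵀ = U1ᵀ * (A0 * (V0 * V0ᵀ)) := by
          rw [hSt]; simp only [Matrix.mul_assoc]
      _ = U1ᵀ * A0 := by rw [hAVV]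
end
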